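/- Let λ be a unit of R and C = e₁C₁ ⊕ e₂C₂ ⊕ e₃C₃ ⊕ e₄C₄ a λ-constacyclic code of length n over R. Then the dual code C^⊥ equals e₁C₁^⊥ ⊕ e₂C₂^⊥ ⊕ e₃C₃^⊥ ⊕ e₄C₄^⊥, where Cᵢ^⊥ is the dual of Cᵢ in F_qⁿ. -/
import Mathlib


set_option synthInstance.maxHeartbeats 1000000
set_option maxHeartbeats 1000000

noncomputable section

open MvPolynomial

/-- Generators u^2-u, v^2-v of the defining ideal. -/
def genSet (F : Type) [Field F] : Set (MvPolynomial (Fin 2) F) :=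
  {X 0 ^ 2 - X 0, X 1 ^ 2 - X 1}

/-- The ring R = F_q[u,v]/(u^2-u, v^2-v). -/
abbrev Rq (F : Type) [Field F] := MvPolynomial (Fin 2) F ⧸ Ideal.span (genSet F)

/-- The image of u in R. -/
def uu (F : Type) [Field F] : Rq F := Ideal.Quotient.mk _ (X 0)

/-- The image of v in R. -/
def vv (F : Type) [Field F] : Rq F := Ideal.Quotient.mk _ (X 1)

/-- The idempotents e1 = 1-u-v+uv, e2 = uv, e3 = u-uv, e4 = v-uv. -/
def ee (F : Type) [Field F] : Fin 4 → Rq F :=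
  ![1 - uu F - vv F + uu F * vv F, uu F * vv F, uu F - uu F * vv F, vv F - uu F * vv F]

/-- Evaluation of R at a point (x,y) with x^2 = x, y^2 = y. -/
def phi4 (F : Type) [Field F] (p : Fin 2 → F) (hp : ∀ i, p i ^ 2 = p i) : Rq F →+* F :=
  Ideal.Quotient.lift _ (aeval p).toRingHom (by
    intro a ha
    have h : Ideal.span (genSet F) ≤ RingHom.ker (aeval p).toRingHom := by
      rw [Ideal.span_le]
      rintro g (rfl | rfl) <;> simp [RingHom.mem_ker, hp 0, hp 1]
    exact h ha)

/-- The projections φ₁, φ₂, φ₃, φ₄ : R → F_q sending a+bu+cv+duv to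
a, a+b+c+d, a+b, a+c respectively (i.e. evaluation at (0,0),(1,1),(1,0),(0,1)). -/
def phiI (F : Type) [Field F] : Fin 4 → (Rq F →+* F) :=
  ![phi4 F ![0,0] (by intro i; fin_cases i <;> norm_num),
    phi4 F ![1,1] (by intro i; fin_cases i <;> norm_num),
    phi4 F ![1,0] (by intro i; fin_cases i <;> norm_num),
    phi4 F ![0,1] (by intro i; fin_cases i <;> norm_num)]

/-- The μ-constacyclic shift (c₀,...,c_{n-1}) ↦ (μ c_{n-1}, c₀, ..., c_{n-2}). -/
def cshift {S : Type} [CommRing S] {n : ℕ} (μ : S) (c : Fin n → S) : Fin n → S :=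
  fun i => if i.val = 0 then μ * c ((finRotate n).symm i) else c ((finRotate n).symm i)

/-- The dual of a code with respect to the standard inner product. -/
def dualCode {S ι : Type} [CommRing S] [Fintype ι] (C : Set (ι → S)) : Set (ι → S) :=
  {r | ∀ s ∈ C, ∑ j, r j * s j = 0}

variable (F : Type) [Field F]

def pts (F : Type) [Field F] : Fin 4 → Fin 2 → F := ![![0,0],![1,1],![1,0],![0,1]]

lemma phiI_mk (i : Fin 4) (q : MvPolynomial (Fin 2) F) :
    phiI F i (Ideal.Quotient.mk _ q) = aeval (pts F i) q := by
  fin_cases i <;> rfl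

lemma hu_sq : uu F ^ 2 = uu F := by
  rw [uu, ← map_pow, Ideal.Quotient.eq]
  exact Ideal.subset_span (Or.inl rfl)

lemma hv_sq : vv F ^ 2 = vv F := by
  rw [vv, ← map_pow, Ideal.Quotient.eq]
  exact Ideal.subset_span (Or.inr rfl)

lemma ee0 : ee F 0 = 1 - uu F - vv F + uu F * vv F := rfl
lemma ee1 : ee F 1 = uu F * vv F := rfl
lemma ee2 : ee F 2 = uu F - uu F * vv F := rfl
lemma ee3 : ee F 3 = vv F - uu F * vv F := rfl
lemma mkX0 : Ideal.Quotient.mk (Ideal.span (genSet F)) (X 0) = uu F := rfl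
lemma mkX1 : Ideal.Quotient.mk (Ideal.span (genSet F)) (X 1) = vv F := rfl

lemma phi_alg (i : Fin 4) (a : F) : phiI F i (algebraMap F (Rq F) a) = a := by
  have : algebraMap F (Rq F) a = Ideal.Quotient.mk _ (C a) := rfl
  rw [this, phiI_mk]; simp

lemma phi_e (i j : Fin 4) : phiI F i (ee F j) = if i = j then 1 else 0 := by
  fin_cases i <;> fin_cases j <;>
    simp [ee0, ee1, ee2, ee3, ← mkX0, ← mkX1, phiI_mk, pts,
      map_sub, map_add, map_mul, map_one]

lemma ee_sum : ∑ i : Fin 4, ee F i = 1 := by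
  rw [Fin.sum_univ_four, ee0, ee1, ee2, ee3]; ring

lemma ee_mul_X (i : Fin 4) (k : Fin 2) :
    ee F i * algebraMap F (Rq F) (phiI F i (Ideal.Quotient.mk (Ideal.span (genSet F)) (X k))) =
      ee F i * Ideal.Quotient.mk (Ideal.span (genSet F)) (X k) := by
  rw [phiI_mk, aeval_X]
  fin_cases i <;> fin_cases k <;>
    simp only [show (⟨0, by norm_num⟩ : Fin 4) = 0 from rfl,
      show (⟨1, by norm_num⟩ : Fin 4) = 1 from rfl,
      show (⟨2, by norm_num⟩ : Fin 4) = 2 from rfl,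
      show (⟨3, by norm_num⟩ : Fin 4) = 3 from rfl,
      show (⟨0, by norm_num⟩ : Fin 2) = 0 from rfl,
      show (⟨1, by norm_num⟩ : Fin 2) = 1 from rfl,
      show pts F 0 0 = (0:F) from rfl, show pts F 0 1 = (0:F) from rfl,
      show pts F 1 0 = (1:F) from rfl, show pts F 1 1 = (1:F) from rfl,
      show pts F 2 0 = (1:F) from rfl, show pts F 2 1 = (0:F) from rfl,
      show pts F 3 0 = (0:F) from rfl, show pts F 3 1 = (1:F) from rfl,
      ee0, ee1, ee2, ee3, mkX0, mkX1, map_zero, map_one, mul_zero, mul_one] <;>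
    first
      | linear_combination (vv F - 1) * hu_sq F
      | linear_combination (1 - vv F) * hu_sq F
      | linear_combination (vv F) * hu_sq F
      | linear_combination (-vv F) * hu_sq F
      | linear_combination (uu F - 1) * hv_sq F
      | linear_combination (1 - uu F) * hv_sq F
      | linear_combination (uu F) * hv_sq F
      | linear_combination (-(uu F)) * hv_sq F

lemma decomp (r : Rq F) :
    ∑ i : Fin 4, ee F i * algebraMap F (Rq F) (phiI F i r) = r := by
  obtain ⟨p, rfl⟩ := Ideal.Quotient.mk_surjective r
  induction p using MvPolynomial.induction_on with
  | C a =>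
    have h : (Ideal.Quotient.mk (Ideal.span (genSet F)) (C a)) = algebraMap F (Rq F) a := rfl
    rw [h]
    simp only [phi_alg]
    rw [← Finset.sum_mul, ee_sum, one_mul]
  | add p q hp hq =>
    simp only [map_add, mul_add, Finset.sum_add_distrib, hp, hq]
  | mul_X p k hp =>
    have h : (Ideal.Quotient.mk (Ideal.span (genSet F)) (p * X k)) =
        Ideal.Quotient.mk _ p * Ideal.Quotient.mk _ (X k) := map_mul _ _ _
    rw [h]
    calc ∑ i : Fin 4, ee F i * algebraMap F (Rq F)
            (phiI F i (Ideal.Quotient.mk _ p * Ideal.Quotient.mk _ (X k)))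
        = ∑ i : Fin 4, (ee F i * algebraMap F (Rq F) (phiI F i (Ideal.Quotient.mk _ (X k)))) *
            algebraMap F (Rq F) (phiI F i (Ideal.Quotient.mk _ p)) := by
          refine Finset.sum_congr rfl fun i _ => ?_
          rw [map_mul, map_mul]; ring
      _ = ∑ i : Fin 4, (ee F i * algebraMap F (Rq F) (phiI F i (Ideal.Quotient.mk _ p))) *
            Ideal.Quotient.mk _ (X k) := by
          refine Finset.sum_congr rfl fun i _ => ?_
          rw [ee_mul_X]; ring
      _ = Ideal.Quotient.mk _ p * Ideal.Quotient.mk _ (X k) := by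
          rw [← Finset.sum_mul, hp]

lemma eq_zero_of_phi (r : Rq F) (h : ∀ i, phiI F i r = 0) : r = 0 := by
  rw [← decomp F r]
  simp [h]


theorem stmt11 (F : Type) [Field F] [Fintype F] (n : ℕ) (hn : 0 < n)
    (lam : Rq F) (hlam : IsUnit lam)
    (C : Submodule (Rq F) (Fin n → Rq F)) (hcc : ∀ c ∈ C, cshift lam c ∈ C)
    (Ci : Fin 4 → Submodule F (Fin n → F))
    (hCi : ∀ i : Fin 4, (Ci i : Set (Fin n → F)) =
      (fun s : Fin n → Rq F => (phiI F i) ∘ s) '' (C : Set (Fin n → Rq F))) :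
    dualCode (C : Set (Fin n → Rq F)) =
      {x : Fin n → Rq F | ∃ d : Fin 4 → (Fin n → F),
        (∀ i : Fin 4, d i ∈ dualCode (Ci i : Set (Fin n → F))) ∧
        x = ∑ i : Fin 4, fun j => ee F i * algebraMap F (Rq F) (d i j)} := by
  ext x
  constructor
  · intro hx
    refine ⟨fun i j => phiI F i (x j), fun i t ht => ?_, ?_⟩
    · rw [hCi i] at ht
      obtain ⟨s, hs, rfl⟩ := ht
      simp only [Function.comp_apply, ← map_mul]
      rw [← map_sum, hx s hs, map_zero]
    · funext j
      rw [Finset.sum_apply]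
      exact (decomp F (x j)).symm
  · rintro ⟨d, hd, rfl⟩
    intro s hs
    simp only [Finset.sum_apply]
    apply eq_zero_of_phi
    intro k
    have hmem : (phiI F k) ∘ s ∈ (Ci k : Set (Fin n → F)) := by
      rw [hCi k]; exact ⟨s, hs, rfl⟩
    have h0 := hd k _ hmem
    simp only [Function.comp_apply] at h0
    simp only [map_sum, map_mul, phi_e, phi_alg, ite_mul, one_mul, zero_mul,
      Finset.sum_ite_eq, Finset.mem_univ, if_true]
    exact h0
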